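/- arXiv:1312.2353 — 5 statements merged into one kernel-verified Lean document; each statement's English description precedes it below -/
import Mathlib

section
/- Even for idempotent updates, a pre-test need not be a post-test: there exist a type DB of databases, an idempotent update U : DB → DB, an integrity theory γ, and a pre-test σ of γ for U such that σ is not a post-test of γ for U, i.e., there is a database D with γ D such that γ (U D) and σ (U D) are not equivalent. (The paper's witness: γ = {← p(a)}, σ = {← ¬p(a)}, D = ∅, and U the insertion of p(a).) -/
/-- A pre-test of γ for U: for every consistent D, γ (U D) ↔ σ D. -/
def IsPreTest {DB : Type*} (γ : DB → Prop) (U : DB → DB) (σ : DB → Prop) : Prop :=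
  ∀ D : DB, γ D → (γ (U D) ↔ σ D)

theorem pretest_not_posttest_idempotent :
    ∃ (DB : Type) (U : DB → DB) (γ σ : DB → Prop),
      (∀ D : DB, U (U D) = U D) ∧ IsPreTest γ U σ ∧
      ∃ D : DB, γ D ∧ ¬ (γ (U D) ↔ σ (U D)) := by
  refine ⟨Bool, fun _ => true, fun b => b = false, fun b => b = true, fun _ => rfl, ?_, false, rfl, ?_⟩
  · intro D hD; simp [hD]
  · simp
end

section
/- Even for idempotent updates, a plain post-test need not be a pre-test: there exist a type DB of databases, an idempotent update U : DB → DB, an integrity theory γ, and a plain post-test υ of γ for U such that υ is not a pre-test of γ for U, i.e., there is a database D with γ D such that γ (U D) and υ D are not equivalent. (The paper's witness: γ = {← p(a)}, υ = γ, D = ∅, and U the insertion of p(a).) -/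
/-- A plain post-test of γ for U: υ (U D) ↔ γ (U D) for every D. -/
def IsPlainPostTest {DB : Type*} (γ : DB → Prop) (U : DB → DB) (υ : DB → Prop) : Prop :=
  ∀ D : DB, υ (U D) ↔ γ (U D)

theorem plain_posttest_not_pretest_idempotent :
    ∃ (DB : Type) (U : DB → DB) (γ υ : DB → Prop),
      (∀ D : DB, U (U D) = U D) ∧ IsPlainPostTest γ U υ ∧
      ∃ D : DB, γ D ∧ ¬ (γ (U D) ↔ υ D) := by
  refine ⟨Bool, fun _ => true, fun D => D = false, fun D => D = false, fun _ => rfl, fun _ => Iff.rfl, false, rfl, ?_⟩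
  simp
end

section
/- A pre-test for an idempotent update can fail to behave as a post-test only in one specific configuration: if U is an idempotent update, σ is a pre-test of an integrity theory γ for U, D is a database with γ D, and γ (U D) is not equivalent to σ (U D), then σ D fails, σ (U D) holds, and γ (U D) fails. -/
theorem pretest_failure_configuration {DB : Type*} (γ : DB → Prop) (U : DB → DB)
    (hU : ∀ D : DB, U (U D) = U D) (σ : DB → Prop) (h : IsPreTest γ U σ)
    (D : DB) (hD : γ D) (hne : ¬ (γ (U D) ↔ σ (U D))) :
    ¬ σ D ∧ σ (U D) ∧ ¬ γ (U D) := by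
  have hg : ¬ γ (U D) := fun hg => hne (by have := h (U D) hg; rwa [hU D] at this)
  exact ⟨fun hs => hg ((h D hD).mpr hs), by tauto, hg⟩
end

section
/- For general (non-idempotent) updates, a plain pre-test need not be a post-test: there exist a type DB of databases, an update U : DB → DB that is not idempotent, an integrity theory γ, and a plain pre-test σ of γ for U such that σ is not a post-test of γ for U, i.e., there is a database D with γ D such that γ (U D) and σ (U D) are not equivalent. (The paper's witness: γ = {← p(a) ∧ q(b)}, U the update exchanging the contents of relations p and q, σ = {← q(a) ∧ p(b)}, and D = {p(a), p(b), q(a)}.) -/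
/-- A plain pre-test of γ for U: σ D ↔ γ (U D) for every D. -/
def IsPlainPreTest {DB : Type*} (γ : DB → Prop) (U : DB → DB) (σ : DB → Prop) : Prop :=
  ∀ D : DB, σ D ↔ γ (U D)

theorem plain_pretest_not_posttest_general :
    ∃ (DB : Type) (U : DB → DB) (γ σ : DB → Prop),
      ¬ (∀ D : DB, U (U D) = U D) ∧ IsPlainPreTest γ U σ ∧
      ∃ D : DB, γ D ∧ ¬ (γ (U D) ↔ σ (U D)) := by
  refine ⟨Bool, fun b => !b, fun b => b = true, fun b => !b = true, ?_, ?_, true, rfl, ?_⟩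
  · intro h; simpa using h true
  · intro D; simp
  · simp
end

section
/- For general updates, a post-test need not be a pre-test: there exist a type DB of databases, an update U : DB → DB, an integrity theory γ, and a post-test υ of γ for U such that υ is not a pre-test of γ for U, i.e., there is a database D with γ D such that γ (U D) and υ D are not equivalent. (The paper's witness: γ = {← p(a) ∧ q(b)}, U the update exchanging the contents of relations p and q, υ = {← p(a) ∧ q(b)}, and D = {p(a), p(b), q(a)}.) -/
/-- A post-test of γ for U: for every consistent D, γ (U D) ↔ υ (U D). -/
def IsPostTest {DB : Type*} (γ : DB → Prop) (U : DB → DB) (υ : DB → Prop) : Prop :=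
  ∀ D : DB, γ D → (γ (U D) ↔ υ (U D))

theorem posttest_not_pretest_general :
    ∃ (DB : Type) (U : DB → DB) (γ υ : DB → Prop),
      IsPostTest γ U υ ∧
      ∃ D : DB, γ D ∧ ¬ (γ (U D) ↔ υ D) := by
  refine ⟨Bool, fun b => !b, fun b => b = true, fun b => b = true, fun D _ => Iff.rfl, true, rfl, ?_⟩
  simp
end
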